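/- arXiv:2310.07894 — 3 statements merged into one kernel-verified Lean document; each statement's English description precedes it below -/
import Mathlib

section
/- If A_t satisfies the matrix ODE dA_t/dt = A_t (B_t - F_t + (1/2) G_t G_t^T C_skip(t)) with A_t invertible, and z_t satisfies dz_t/dt = (F_t - (1/2) G_t G_t^T C_skip(t)) z_t - (1/2) G_t G_t^T C_out(t) ε(z_t, t), then ẑ_t = A_t z_t satisfies dẑ_t/dt = A_t B_t A_t⁻¹ ẑ_t + dΦ_t/dt · ε(A_t⁻¹ ẑ_t, t), where dΦ_t/dt = -(1/2) A_t G_t G_t^T C_out(t). -/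
attribute [local instance] Matrix.normedAddCommGroup Matrix.normedSpace

open Matrix

/-
Product rule for `ẑ = A z`: its derivative is `A' z + A z'`. Substituting the two ODEs, the
`F` and `G Gᵀ C_skip` terms cancel, leaving `A B z - (1/2) A G Gᵀ C_out ε(z, t)`, and
`z = A⁻¹ ẑ` because `A` is invertible.
-/

section MulVec

variable (𝕜 : Type*) [NontriviallyNormedField 𝕜] [CompleteSpace 𝕜] (m n : Type*)
  [Fintype m] [Fintype n]

noncomputable def Matrix.mulVecCLM : Matrix m n 𝕜 →L[𝕜] (n → 𝕜) →L[𝕜] (m → 𝕜) :=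
  LinearMap.toContinuousLinearMap
    (LinearMap.toContinuousLinearMap.toLinearMap ∘ₗ mulVecBilin 𝕜 𝕜)

variable {𝕜 m n}

@[simp]
theorem Matrix.mulVecCLM_apply (M : Matrix m n 𝕜) (v : n → 𝕜) :
    mulVecCLM 𝕜 m n M v = M *ᵥ v :=
  rfl

theorem HasDerivAt.matrix_mulVec {A : 𝕜 → Matrix m n 𝕜} {z : 𝕜 → n → 𝕜}
    {A' : Matrix m n 𝕜} {z' : n → 𝕜} {t : 𝕜}
    (hA : HasDerivAt A A' t) (hz : HasDerivAt z z' t) :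
    HasDerivAt (fun t => A t *ᵥ z t) (A' *ᵥ z t + A t *ᵥ z') t := by
  have hAL : HasDerivAt (fun t => mulVecCLM 𝕜 m n (A t)) (mulVecCLM 𝕜 m n A') t :=
    (mulVecCLM 𝕜 m n).hasFDerivAt.comp_hasDerivAt t hA
  simpa using hAL.clm_apply hz

end MulVec

theorem transformed_ode_general
    (d : ℕ)
    (F G B Cskip Cout : ℝ → Matrix (Fin d) (Fin d) ℝ)
    (ε : (Fin d → ℝ) → ℝ → (Fin d → ℝ))
    (A : ℝ → Matrix (Fin d) (Fin d) ℝ)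
    (hAunit : ∀ t, IsUnit (A t))
    (hA : ∀ t, HasDerivAt A
      (A t * (B t - F t + (1/2 : ℝ) • (G t * (G t)ᵀ * Cskip t))) t)
    (z : ℝ → (Fin d → ℝ))
    (hz : ∀ t, HasDerivAt z
      ((F t - (1/2 : ℝ) • (G t * (G t)ᵀ * Cskip t)).mulVec (z t)
        - ((1/2 : ℝ) • (G t * (G t)ᵀ * Cout t)).mulVec (ε (z t) t)) t) :
    ∀ t, HasDerivAt (fun t => (A t).mulVec (z t))
      ((A t * B t * (A t)⁻¹).mulVec ((A t).mulVec (z t))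
        + (-(1/2 : ℝ) • (A t * (G t * (G t)ᵀ * Cout t))).mulVec
            (ε ((A t)⁻¹.mulVec ((A t).mulVec (z t))) t)) t := by
  intro t
  have hdet : IsUnit (A t).det := (A t).isUnit_iff_isUnit_det.mp (hAunit t)
  convert (hA t).matrix_mulVec (hz t) using 1
  rw [mulVec_mulVec, mulVec_mulVec, nonsing_inv_mul _ hdet, one_mulVec,
    nonsing_inv_mul_cancel_right _ _ hdet]
  simp only [mul_add, mul_sub, add_mulVec, sub_mulVec, mulVec_sub, mulVec_mulVec, mulVec_smul,
    mul_smul_comm, smul_mulVec, neg_smul, neg_mulVec]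
  abel

/-- Theorem 1 (transformed probability-flow ODE): if `A` satisfies
`dA/dt = A (B - F + (1/2) G Gᵀ C_skip)` with `A t` invertible, and `z` satisfies the
probability-flow ODE with the mixed score parameterization, then `ẑ t = A t z t`
satisfies the transformed ODE
`dẑ/dt = A B A⁻¹ ẑ + (dΦ/dt) ε(A⁻¹ ẑ, t)`, where `dΦ/dt = -(1/2) A G Gᵀ C_out`. -/
theorem transformed_ode
    (d : ℕ) (hd : 0 < d)
    (F G B Cskip Cout : ℝ → Matrix (Fin d) (Fin d) ℝ)
    (hF : Continuous F) (hG : Continuous G) (hB : Continuous B)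
    (hCskip : Continuous Cskip) (hCout : Continuous Cout)
    (ε : (Fin d → ℝ) → ℝ → (Fin d → ℝ)) (hε : Continuous fun p : (Fin d → ℝ) × ℝ => ε p.1 p.2)
    (A : ℝ → Matrix (Fin d) (Fin d) ℝ)
    (hAunit : ∀ t, IsUnit (A t))
    (hA : ∀ t, HasDerivAt A
      (A t * (B t - F t + (1/2 : ℝ) • (G t * (G t)ᵀ * Cskip t))) t)
    (z : ℝ → (Fin d → ℝ))
    (hz : ∀ t, HasDerivAt z
      ((F t - (1/2 : ℝ) • (G t * (G t)ᵀ * Cskip t)).mulVec (z t)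
        - ((1/2 : ℝ) • (G t * (G t)ᵀ * Cout t)).mulVec (ε (z t) t)) t) :
    ∀ t, HasDerivAt (fun t => (A t).mulVec (z t))
      ((A t * B t * (A t)⁻¹).mulVec ((A t).mulVec (z t))
        + (-(1/2 : ℝ) • (A t * (G t * (G t)ᵀ * Cout t))).mulVec
            (ε ((A t)⁻¹.mulVec ((A t).mulVec (z t))) t)) t :=
  transformed_ode_general d F G B Cskip Cout ε A hAunit hA z hz
end

section
/- The Reduced Velocity Verlet scheme, obtained from Naive Velocity Verlet by reusing the score evaluation s(x_t, m_t) (instead of s(x_t, m_{t+h/2})) in the position update, has local truncation error in the position variable equal to (h²βΓ/4)·(d/dt)[x(t) + s(x(t), m(t))] + O(h³); in particular it is bounded by C·Γ·h². -/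
open Set

/-- Momentum drift `G(x,m) = (β/2) x + (βν/2) m + (βMν/2) r(x,m)`. -/
noncomputable def Gdrift (d : ℕ) (β ν M : ℝ) (r : ((Fin d → ℝ) × (Fin d → ℝ)) → (Fin d → ℝ))
    (p : (Fin d → ℝ) × (Fin d → ℝ)) : Fin d → ℝ :=
  (β / 2) • p.1 + (β * ν / 2) • p.2 + (β * M * ν / 2) • r p

/-!
Along the exact flow the vector field is `C²`, so `x` is `C³` and Taylor's theorem gives
`x(t+h) = x + h x' + (h²/2) x'' + O(h³)` uniformly for `t` in a compact interval. Writing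
`x' = (βΓ/2)(x + s(x,m)) - (β/(2M)) m` shows `x'' = (βΓ/2) D - (β/(2M)) G`, so the reduced step,
whose half-step momentum supplies exactly the `-(β/(2M)) G` part of `x''`, misses the Taylor
polynomial by `(h²βΓ/4) D`; as `D` is bounded on `[a, b]`, this term is `O(Γh²)`.
-/

section

variable {E : Type*} [NormedAddCommGroup E] [NormedSpace ℝ E]

open Nat in
theorem exists_norm_sub_sum_iteratedDeriv_le {f : ℝ → E} {n : ℕ} (hf : ContDiff ℝ (n + 1) f)
    (a b : ℝ) :
    ∃ A, 0 ≤ A ∧ ∀ t ∈ Icc a b, ∀ h ∈ Ioc (0 : ℝ) 1,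
      ‖f (t + h) - ∑ k ∈ Finset.range (n + 1), ((k ! : ℝ)⁻¹ * h ^ k) • iteratedDeriv k f t‖
        ≤ A * h ^ (n + 1) := by
  obtain ⟨C, hC⟩ := isCompact_Icc.exists_bound_of_continuousOn (s := Icc a (b + 1))
    (hf.continuous_iteratedDeriv (n + 1) le_rfl).continuousOn
  refine ⟨max C 0 / n !, by positivity, fun t ht h ⟨hh0, hh1⟩ => ?_⟩
  have hlt : t < t + h := by linarith
  have hsub : Icc t (t + h) ⊆ Icc a (b + 1) := Icc_subset_Icc ht.1 (by linarith [ht.2])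
  have hwithin : ∀ k ≤ n + 1, ∀ y ∈ Icc t (t + h),
      iteratedDerivWithin k f (Icc t (t + h)) y = iteratedDeriv k f y := fun k hk y hy =>
    iteratedDerivWithin_eq_iteratedDeriv (uniqueDiffOn_Icc hlt)
      ((hf.of_le (by exact_mod_cast hk)).contDiffAt) hy
  have key := taylor_mean_remainder_bound (C := max C 0) hlt.le hf.contDiffOn
    (right_mem_Icc.2 hlt.le) fun y hy => by
      rw [hwithin _ le_rfl y hy]; exact (hC y (hsub hy)).trans (le_max_left _ _)
  rw [taylor_within_apply, add_sub_cancel_left] at key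
  rw [Finset.sum_congr rfl fun k hk => by
    rw [← hwithin k (Finset.mem_range.1 hk).le t (left_mem_Icc.2 hlt.le)]]
  exact key.trans_eq (by ring)

theorem exists_norm_sub_taylor_two_le {f : ℝ → E} (hf : ContDiff ℝ 3 f) (a b : ℝ) :
    ∃ A, 0 ≤ A ∧ ∀ t ∈ Icc a b, ∀ h ∈ Ioc (0 : ℝ) 1,
      ‖f (t + h) - (f t + h • deriv f t + (h ^ 2 / 2) • deriv (deriv f) t)‖ ≤ A * h ^ 3 := by
  obtain ⟨A, hA0, hA⟩ := exists_norm_sub_sum_iteratedDeriv_le (n := 2) hf a b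
  refine ⟨A, hA0, fun t ht h hh => ?_⟩
  convert hA t ht h hh using 3
  simp only [Finset.sum_range_succ, Finset.sum_range_zero, iteratedDeriv_zero, iteratedDeriv_succ]
  norm_num [Nat.factorial]
  module

theorem contDiff_succ_of_hasDerivAt_comp {V : E → E} {y : ℝ → E} {n : ℕ} (hV : ContDiff ℝ n V)
    (hy : ∀ t, HasDerivAt y (V (y t)) t) :
    ContDiff ℝ (n + 1) y := by
  have hderiv : deriv y = V ∘ y := funext fun t => (hy t).deriv
  have hdiff : Differentiable ℝ y := fun t => (hy t).differentiableAt
  induction n with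
  | zero =>
    exact contDiff_one_iff_deriv.2 ⟨hdiff, hderiv ▸ hV.continuous.comp hdiff.continuous⟩
  | succ n ih =>
    rw [contDiff_succ_iff_deriv]
    exact ⟨hdiff, by simp, hderiv ▸ hV.comp (ih (hV.of_le (by norm_cast; omega)))⟩

theorem exists_pos_local_error_const {A Γ : ℝ} (hA : 0 ≤ A) (hΓ : 0 < Γ) (β B : ℝ) :
    ∃ C > 0, ∀ h ∈ Ioc (0 : ℝ) 1, ∀ R v : E, ‖R‖ ≤ A * h ^ 3 → ‖v‖ ≤ B →
      ‖R‖ ≤ C * h ^ 3 ∧ ‖R + (h ^ 2 * β * Γ / 4) • v‖ ≤ C * Γ * h ^ 2 := by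
  refine ⟨A + A / Γ + |β| * max B 0 / 4 + 1, by positivity, ?_⟩
  rintro h ⟨hh0, hh1⟩ R v hR hv
  have hcorr : ‖(h ^ 2 * β * Γ / 4) • v‖ ≤ h ^ 2 * (|β| * Γ / 4) * max B 0 := by
    have hc : |h ^ 2 * β * Γ / 4| = h ^ 2 * (|β| * Γ / 4) := by
      rw [abs_div, abs_mul, abs_mul, abs_of_pos hΓ, abs_of_nonneg (sq_nonneg h)]
      norm_num
      ring
    rw [norm_smul, Real.norm_eq_abs, hc]
    gcongr
    exact hv.trans (le_max_left _ _)
  have h3 : h ^ 3 ≤ h ^ 2 := pow_le_pow_of_le_one hh0.le hh1 (by norm_num)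
  constructor
  · refine hR.trans (mul_le_mul_of_nonneg_right ?_ (by positivity))
    have : 0 ≤ A / Γ + |β| * max B 0 / 4 := by positivity
    linarith
  · calc _ ≤ A * h ^ 2 + h ^ 2 * (|β| * Γ / 4) * max B 0 :=
          (norm_add_le _ _).trans (add_le_add (hR.trans (by gcongr)) hcorr)
      _ ≤ (A + A / Γ + |β| * max B 0 / 4 + 1) * Γ * h ^ 2 := by
          rw [show (A + A / Γ + |β| * max B 0 / 4 + 1) * Γ * h ^ 2
              = A * h ^ 2 + h ^ 2 * (|β| * Γ / 4) * max B 0 + (A + 1) * Γ * h ^ 2 by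
            field_simp; ring]
          exact le_add_of_nonneg_right (by positivity)

end

section RVV

variable {d : ℕ} {β Γ ν M : ℝ} {s r : ((Fin d → ℝ) × (Fin d → ℝ)) → (Fin d → ℝ)}
  {x m D : ℝ → (Fin d → ℝ)}

theorem contDiff_Gdrift {n : WithTop ℕ∞} (hr : ContDiff ℝ n r) :
    ContDiff ℝ n (Gdrift d β ν M r) :=
  ((contDiff_fst.const_smul _).add (contDiff_snd.const_smul _)).add (hr.const_smul _)

theorem contDiff_three_of_hasDerivAt_drift (hs : ContDiff ℝ 2 s) (hr : ContDiff ℝ 2 r)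
    (hx : ∀ t, HasDerivAt x
      ((β * Γ / 2) • x t - (β / (2 * M)) • m t + (β * Γ / 2) • s (x t, m t)) t)
    (hm : ∀ t, HasDerivAt m (Gdrift d β ν M r (x t, m t)) t) :
    ContDiff ℝ 3 fun t => (x t, m t) :=
  contDiff_succ_of_hasDerivAt_comp (n := 2)
    (((contDiff_fst.const_smul _).sub (contDiff_snd.const_smul _)).add (hs.const_smul _)
      |>.prodMk (contDiff_Gdrift hr))
    fun t => (hx t).prodMk (hm t)

theorem deriv_deriv_eq_of_hasDerivAt_drift
    (hx : ∀ t, HasDerivAt x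
      ((β * Γ / 2) • x t - (β / (2 * M)) • m t + (β * Γ / 2) • s (x t, m t)) t)
    (hm : ∀ t, HasDerivAt m (Gdrift d β ν M r (x t, m t)) t)
    (hD : ∀ t, HasDerivAt (fun t => x t + s (x t, m t)) (D t) t) (t : ℝ) :
    deriv (deriv x) t = (β * Γ / 2) • D t - (β / (2 * M)) • Gdrift d β ν M r (x t, m t) := by
  have hderiv : deriv x = fun t => (β * Γ / 2) • (x t + s (x t, m t)) - (β / (2 * M)) • m t :=
    funext fun t => (hx t).deriv.trans (by module)
  rw [hderiv]
  exact (((hD t).const_smul (β * Γ / 2)).sub ((hm t).const_smul (β / (2 * M)))).deriv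

end RVV

theorem rvv_position_step_eq {E : Type*} [AddCommGroup E] [Module ℝ E] (β Γ M h : ℝ)
    (X X' Mv Gv S Dv : E) :
    X' - (X + h • ((β * Γ / 2) • X - (β / (2 * M)) • (Mv + (h / 2) • Gv) + (β * Γ / 2) • S))
      = X' - (X + h • ((β * Γ / 2) • X - (β / (2 * M)) • Mv + (β * Γ / 2) • S)
          + (h ^ 2 / 2) • ((β * Γ / 2) • Dv - (β / (2 * M)) • Gv))
        + (h ^ 2 * β * Γ / 4) • Dv := by
  module

theorem rvv_position_local_error_general
    (d : ℕ) (β Γ ν M : ℝ) (hΓ : 0 < Γ)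
    (s r : ((Fin d → ℝ) × (Fin d → ℝ)) → (Fin d → ℝ))
    (hs : ContDiff ℝ 2 s) (hr : ContDiff ℝ 2 r)
    (a b : ℝ)
    (x m : ℝ → (Fin d → ℝ))
    (hx : ∀ t, HasDerivAt x
      ((β * Γ / 2) • x t - (β / (2 * M)) • m t + (β * Γ / 2) • s (x t, m t)) t)
    (hm : ∀ t, HasDerivAt m (Gdrift d β ν M r (x t, m t)) t)
    (D : ℝ → (Fin d → ℝ))
    (hD : ∀ t, HasDerivAt (fun t => x t + s (x t, m t)) (D t) t) :
    ∃ C > 0, ∀ t ∈ Icc a b, ∀ h ∈ Ioc (0:ℝ) 1,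
      (‖x (t + h) -
          (let mhalf := m t + (h/2) • Gdrift d β ν M r (x t, m t);
           x t + h • ((β * Γ / 2) • x t - (β / (2 * M)) • mhalf
             + (β * Γ / 2) • s (x t, m t)))
        - (h ^ 2 * β * Γ / 4) • D t‖ ≤ C * h ^ 3)
      ∧ ‖x (t + h) -
          (let mhalf := m t + (h/2) • Gdrift d β ν M r (x t, m t);
           x t + h • ((β * Γ / 2) • x t - (β / (2 * M)) • mhalf
             + (β * Γ / 2) • s (x t, m t)))‖ ≤ C * Γ * h ^ 2 := by
  have hxm := contDiff_three_of_hasDerivAt_drift hs hr hx hm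
  obtain ⟨A, hA0, hA⟩ := exists_norm_sub_taylor_two_le hxm.fst a b
  have hD_cont : Continuous D := by
    rw [show D = deriv fun t => x t + s (x t, m t) from funext fun t => (hD t).deriv.symm]
    exact ((hxm.fst.of_le (by norm_num)).add (hs.comp (hxm.of_le (by norm_num)))).continuous_deriv
      one_le_two
  obtain ⟨B, hB⟩ := isCompact_Icc.exists_bound_of_continuousOn (s := Icc a b) hD_cont.continuousOn
  obtain ⟨C, hC0, hC⟩ := exists_pos_local_error_const (E := Fin d → ℝ) hA0 hΓ β B
  refine ⟨C, hC0, fun t ht h hh => ?_⟩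
  dsimp only
  rw [rvv_position_step_eq (Dv := D t), add_sub_cancel_right, ← (hx t).deriv,
    ← deriv_deriv_eq_of_hasDerivAt_drift hx hm hD t]
  exact hC h hh _ _ (hA t ht h hh) (hB t ht)

/-- The Reduced Velocity Verlet scheme, which reuses the score evaluation
`s(x_t, m_t)` in the position update, has local truncation error in the position
variable equal to `(h²βΓ/4) (d/dt)[x(t) + s(x(t), m(t))] + O(h³)`; in particular it
is bounded by `C Γ h²`. -/
theorem rvv_position_local_error
    (d : ℕ) (β Γ ν M : ℝ) (hβ : 0 < β) (hΓ : 0 < Γ) (hν : 0 < ν) (hM : 0 < M)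
    (s r : ((Fin d → ℝ) × (Fin d → ℝ)) → (Fin d → ℝ))
    (hs : ContDiff ℝ 2 s) (hr : ContDiff ℝ 2 r)
    (K : ℝ)
    (hbound : ∀ p, ‖s p‖ ≤ K ∧ ‖r p‖ ≤ K ∧
      ‖fderiv ℝ s p‖ ≤ K ∧ ‖fderiv ℝ r p‖ ≤ K ∧
      ‖iteratedFDeriv ℝ 2 s p‖ ≤ K ∧ ‖iteratedFDeriv ℝ 2 r p‖ ≤ K)
    (a b : ℝ) (hab : a ≤ b)
    (x m : ℝ → (Fin d → ℝ))
    (hx : ∀ t, HasDerivAt x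
      ((β * Γ / 2) • x t - (β / (2 * M)) • m t + (β * Γ / 2) • s (x t, m t)) t)
    (hm : ∀ t, HasDerivAt m (Gdrift d β ν M r (x t, m t)) t)
    (D : ℝ → (Fin d → ℝ))
    (hD : ∀ t, HasDerivAt (fun t => x t + s (x t, m t)) (D t) t) :
    ∃ C > 0, ∀ t ∈ Icc a b, ∀ h ∈ Ioc (0:ℝ) 1,
      (‖x (t + h) -
          (let mhalf := m t + (h/2) • Gdrift d β ν M r (x t, m t);
           x t + h • ((β * Γ / 2) • x t - (β / (2 * M)) • mhalf
             + (β * Γ / 2) • s (x t, m t)))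
        - (h ^ 2 * β * Γ / 4) • D t‖ ≤ C * h ^ 3)
      ∧ ‖x (t + h) -
          (let mhalf := m t + (h/2) • Gdrift d β ν M r (x t, m t);
           x t + h • ((β * Γ / 2) • x t - (β / (2 * M)) • mhalf
             + (β * Γ / 2) • s (x t, m t)))‖ ≤ C * Γ * h ^ 2 :=
  rvv_position_local_error_general d β Γ ν M hΓ s r hs hr a b x m hx hm D hD
end

section
/- Exponential-integrator equivalence: if ẑ satisfies the update ẑ_{t-h} = ẑ_t + (Φ_{t-h} - Φ_t) ε(A_t⁻¹ ẑ_t, t) with ẑ_t = A_t z_t, A invertible and Φ_t = (1/2) ∫_0^t A_s G_s G_s^T L_s^{-T} ds, then z satisfies z_{t-h} = ψ(t-h, t) z_t + (1/2) (∫_t^{t-h} ψ(t-h, s) G_s G_s^T L_s^{-T} ds) ε(z_t, t), where ψ(a, b) = A_a⁻¹ A_b. -/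
attribute [local instance] Matrix.normedAddCommGroup Matrix.normedSpace

open Matrix intervalIntegral

/-!
Multiplying the update for `ẑ` on the left by `A_{t-h}⁻¹` gives the claim: the first term
becomes `A_{t-h}⁻¹ A_t z_t = ψ(t-h, t) z_t`, and since the integrand is continuous,
`Φ_{t-h} - Φ_t` is half the integral of `A_s G_s G_sᵀ L_s⁻ᵀ` from `t` to `t - h`, into which the
constant factor `A_{t-h}⁻¹` can be pulled, turning `A_{t-h}⁻¹ A_s` into `ψ(t-h, s)`.
-/

theorem Continuous.matrix_inv {X n 𝕜 : Type*} [TopologicalSpace X] [Fintype n] [DecidableEq n]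
    [NormedField 𝕜] {M : X → Matrix n n 𝕜} (hM : Continuous M) (hunit : ∀ x, IsUnit (M x)) :
    Continuous fun x => (M x)⁻¹ :=
  continuous_iff_continuousAt.2 fun x =>
    (continuousAt_matrix_inv _ <| by
      rw [Ring.inverse_eq_inv']
      exact continuousAt_inv₀ ((isUnit_iff_isUnit_det _).1 (hunit x)).ne_zero).comp
      hM.continuousAt

theorem Matrix.mul_intervalIntegral {n : Type*} [Fintype n] [DecidableEq n]
    (B : Matrix n n ℝ) {f : ℝ → Matrix n n ℝ} (hf : Continuous f) (a b : ℝ) :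
    B * ∫ s in a..b, f s = ∫ s in a..b, B * f s :=
  ((LinearMap.mulLeft ℝ B).toContinuousLinearMap.intervalIntegral_comp_comm
    (hf.intervalIntegrable a b)).symm

theorem exponential_integrator_equivalence_general
    (d : ℕ)
    (A G L : ℝ → Matrix (Fin d) (Fin d) ℝ)
    (hAdiff : Differentiable ℝ A) (hAunit : ∀ t, IsUnit (A t))
    (hGcont : Continuous G) (hLcont : Continuous L) (hLunit : ∀ s, IsUnit (L s))
    (ε : (Fin d → ℝ) → ℝ → (Fin d → ℝ))
    (Φ : ℝ → Matrix (Fin d) (Fin d) ℝ)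
    (hΦ : ∀ t, Φ t = (1/2 : ℝ) • ∫ s in (0:ℝ)..t, A s * G s * (G s)ᵀ * ((L s)ᵀ)⁻¹)
    (ψ : ℝ → ℝ → Matrix (Fin d) (Fin d) ℝ)
    (hψ : ∀ a b, ψ a b = (A a)⁻¹ * A b)
    (t h : ℝ)
    (zhat : ℝ → (Fin d → ℝ)) (z : ℝ → (Fin d → ℝ))
    (hz : ∀ u, z u = ((A u)⁻¹).mulVec (zhat u))
    (hupdate : zhat (t - h) = zhat t +
      (Φ (t - h) - Φ t).mulVec (ε (((A t)⁻¹).mulVec (zhat t)) t)) :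
    z (t - h) = (ψ (t - h) t).mulVec (z t) +
      ((1/2 : ℝ) • ∫ s in t..(t - h),
          ψ (t - h) s * G s * (G s)ᵀ * ((L s)ᵀ)⁻¹).mulVec (ε (z t) t) := by
  have hzhat : zhat t = (A t).mulVec (z t) := by
    rw [hz, mulVec_mulVec, mul_nonsing_inv _ ((isUnit_iff_isUnit_det _).1 (hAunit t)),
      one_mulVec]
  have hcont : Continuous fun s => A s * G s * (G s)ᵀ * ((L s)ᵀ)⁻¹ := by
    have := hAdiff.continuous
    have := hLcont.matrix_transpose.matrix_inv fun s => (isUnit_transpose _).2 (hLunit s)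
    fun_prop
  have hΦsub : (A (t - h))⁻¹ * (Φ (t - h) - Φ t) =
      (1/2 : ℝ) • ∫ s in t..(t - h), ψ (t - h) s * G s * (G s)ᵀ * ((L s)ᵀ)⁻¹ := by
    rw [hΦ, hΦ, ← smul_sub, integral_interval_sub_left (hcont.intervalIntegrable _ _)
      (hcont.intervalIntegrable _ _), mul_smul_comm, mul_intervalIntegral _ hcont]
    simp only [hψ, mul_assoc]
  rw [hz (t - h), hupdate, ← hz t, hzhat, mulVec_add, mulVec_mulVec, mulVec_mulVec, hΦsub, hψ]

/-- Exponential-integrator equivalence: if the transformed state satisfies the update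
`ẑ_{t-h} = ẑ_t + (Φ_{t-h} - Φ_t) ε(A_t⁻¹ ẑ_t, t)` with `ẑ_t = A_t z_t` and
`Φ_t = (1/2) ∫_0^t A_s G_s G_sᵀ L_s⁻ᵀ ds`, then the original-space state satisfies
`z_{t-h} = ψ(t-h, t) z_t + (1/2) (∫_t^{t-h} ψ(t-h, s) G_s G_sᵀ L_s⁻ᵀ ds) ε(z_t, t)`
where `ψ(a, b) = A_a⁻¹ A_b`. -/
theorem exponential_integrator_equivalence
    (d : ℕ)
    (A G L : ℝ → Matrix (Fin d) (Fin d) ℝ)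
    (hAdiff : Differentiable ℝ A) (hAunit : ∀ t, IsUnit (A t))
    (hGcont : Continuous G) (hLcont : Continuous L) (hLunit : ∀ s, IsUnit (L s))
    (ε : (Fin d → ℝ) → ℝ → (Fin d → ℝ))
    (Φ : ℝ → Matrix (Fin d) (Fin d) ℝ)
    (hΦ : ∀ t, Φ t = (1/2 : ℝ) • ∫ s in (0:ℝ)..t, A s * G s * (G s)ᵀ * ((L s)ᵀ)⁻¹)
    (ψ : ℝ → ℝ → Matrix (Fin d) (Fin d) ℝ)
    (hψ : ∀ a b, ψ a b = (A a)⁻¹ * A b)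
    (t h : ℝ) (hh : 0 < h)
    (zhat : ℝ → (Fin d → ℝ)) (z : ℝ → (Fin d → ℝ))
    (hz : ∀ u, z u = ((A u)⁻¹).mulVec (zhat u))
    (hupdate : zhat (t - h) = zhat t +
      (Φ (t - h) - Φ t).mulVec (ε (((A t)⁻¹).mulVec (zhat t)) t)) :
    z (t - h) = (ψ (t - h) t).mulVec (z t) +
      ((1/2 : ℝ) • ∫ s in t..(t - h),
          ψ (t - h) s * G s * (G s)ᵀ * ((L s)ᵀ)⁻¹).mulVec (ε (z t) t) :=
  exponential_integrator_equivalence_general d A G L hAdiff hAunit hGcont hLcont hLunit ε Φ hΦ ψ hψ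
    t h zhat z hz hupdate
end
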